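/- Let p be a strict protometric of transitive type on X: ∀ x y z, p(y,x) + p(x,z) ≥ p(y,z) + p(x,x), with strict inequality when z = y and y ≠ x. Then d(x,y) = p(x,y) + p(y,x) − p(x,x) − p(y,y) is a metric on X: symmetric, satisfying the triangle inequality, with d(x,y) = 0 if and only if x = y. -/
import Mathlib


theorem stmt18 {X : Type*} (p : X → X → ℝ)
    (h : ∀ x y z, p y x + p x z ≥ p y z + p x x)
    (hstrict : ∀ x y, y ≠ x → p y x + p x y > p y y + p x x)
    (d : X → X → ℝ) (hd : ∀ x y, d x y = p x y + p y x - p x x - p y y) :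
    (∀ x y, d x y = d y x) ∧ (∀ x y z, d x y + d y z ≥ d x z) ∧
    (∀ x y, d x y = 0 ↔ x = y) := by
  refine ⟨fun x y => by rw [hd, hd]; ring, fun x y z => ?_, fun x y => ?_⟩
  · have h1 := h y x z
    have h2 := h y z x
    rw [hd, hd, hd]; linarith
  · constructor
    · intro h0
      by_contra hne
      have := hstrict x y (Ne.symm hne)
      rw [hd] at h0; linarith
    · rintro rfl; rw [hd]; ring
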